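/- Consider the saw map setup with the assumption 'q_k + e_k/α_{k−1} > p_k for 1 ≤ k ≤ k* − 1' dropped, and assume additionally that all the local maximum points of the graph lie on a common straight line of slope in (0,1): there exist a ∈ ℝ and m with 0 < m < 1 such that p_k = a + m·r_k for all k ≥ 0. Then q_k + e_k/α_k > T(r_k) = p_k for all k with 1 ≤ k < k*. (In particular, since α_k > α_{k−1}, the dropped assumption q_k + e_k/α_{k−1} > p_k holds for all 1 ≤ k ≤ k* − 1.) -/

import Mathlib

/-- `T` is affine (linear) on the segment `[a, b]`. -/
def AffOn (T : ℝ → ℝ) (a b : ℝ) : Prop :=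
  ∃ m c : ℝ, ∀ x ∈ Set.Icc a b, T x = m * x + c

/-- The "saw map" setup: sequences `q, r, p`, the map `T`, fixed points `e k ∈ (q (k+1), r k)`
and `ehat k ∈ (r k, q k)`, and the index `kstar`, subject to all standing assumptions. -/
structure SawMapSetup where
  q : ℕ → ℝ
  r : ℕ → ℝ
  p : ℕ → ℝ
  T : ℝ → ℝ
  e : ℕ → ℝ
  ehat : ℕ → ℝ
  kstar : ℕ
  hq_pos : ∀ k, 1 ≤ k → 0 < q k
  hr_pos : ∀ k, 0 < r k
  hq1r0 : q 1 < r 0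
  hrq : ∀ k, 1 ≤ k → r k < q k
  hqr : ∀ k, 1 ≤ k → q (k + 1) < r k
  hq_lim : Filter.Tendsto q Filter.atTop (nhds 0)
  hr_lim : Filter.Tendsto r Filter.atTop (nhds 0)
  hp_pos : ∀ k, 0 < p k
  hp_dec : ∀ k, p (k + 1) < p k
  hp0r0 : p 0 < r 0
  hpr : ∀ k, 1 ≤ k → r k < p k
  hT0 : T 0 = 0
  hTq : ∀ k, 1 ≤ k → T (q k) = 0
  hTr : ∀ k, T (r k) = p k
  haff0 : AffOn T (q 1) (r 0)
  haff1 : ∀ k, 1 ≤ k → AffOn T (q (k + 1)) (r k)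
  haff2 : ∀ k, 1 ≤ k → AffOn T (r k) (q k)
  hTJ : Set.MapsTo T (Set.Icc 0 (r 0)) (Set.Icc 0 (r 0))
  halpha1 : ∀ k, 1 ≤ k → 1 < p k / (r k - q (k + 1))
  he_mem : ∀ k, 1 ≤ k → e k ∈ Set.Ioo (q (k + 1)) (r k)
  he_fix : ∀ k, 1 ≤ k → T (e k) = e k
  he_uniq : ∀ k, 1 ≤ k → ∀ x ∈ Set.Ioo (q (k + 1)) (r k), T x = x → x = e k
  hehat_mem : ∀ k, 1 ≤ k → ehat k ∈ Set.Ioo (r k) (q k)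
  hehat_fix : ∀ k, 1 ≤ k → T (ehat k) = ehat k
  hehat_uniq : ∀ k, 1 ≤ k → ∀ x ∈ Set.Ioo (r k) (q k), T x = x → x = ehat k
  halpha_mono : ∀ k, p k / (r k - q (k + 1)) < p (k + 1) / (r (k + 1) - q (k + 2))
  hbeta_mono : ∀ k, 1 ≤ k → p k / (q k - r k) < p (k + 1) / (q (k + 1) - r (k + 1))
  hkstar : 1 ≤ kstar
  hp_e_big : ∀ k, kstar + 1 ≤ k → e (k - 1) < p k
  hp_e_small : 2 ≤ kstar → ∀ k, 2 ≤ k → k ≤ kstar → p k < e (k - 1)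

namespace SawMapSetup

variable (S : SawMapSetup)

/-- Absolute value of the slope of `T` on `[q (k+1), r k]`. -/
noncomputable def alpha (k : ℕ) : ℝ := S.p k / (S.r k - S.q (k + 1))

/-- Absolute value of the slope of `T` on `[r k, q k]`. -/
noncomputable def beta (k : ℕ) : ℝ := S.p k / (S.q k - S.r k)

/-- The invariant segment `J* = [0, p kstar]`. -/
def Jstar : Set ℝ := Set.Icc 0 (S.p S.kstar)

/-- The segment `J_k = [e k, p k]`. -/
def Jk (k : ℕ) : Set ℝ := Set.Icc (S.e k) (S.p k)

/-- The segment `G_k = [T (p k), p k]`. -/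
def Gk (k : ℕ) : Set ℝ := Set.Icc (S.T (S.p k)) (S.p k)

/-- The set `Ω` of points of `J*` that are eventually mapped to `0`. -/
def Omega : Set ℝ := {x | x ∈ S.Jstar ∧ ∃ n, 1 ≤ n ∧ S.T^[n] x = 0}

/-- The set `Σ`, the closure of `Ω`. -/
def Sig : Set ℝ := closure S.Omega

end SawMapSetup

/-!
The graph of `T` on `[q (k+1), r k]` is the line of slope `α k` through `(q (k+1), 0)`, so its
fixed point satisfies `e k / α k = e k - q (k+1)`, and the claim reads
`p k - p (k+1) < (q k - q (k+1)) + (e k - p (k+1))`. The last bracket is positive because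
`k + 1 ≤ k*`. Since the maxima lie on a line of slope `m < 1`,
`p k - p (k+1) = m (r k - r (k+1)) < r k - r (k+1)`, and this is at most `q k - q (k+1)`
because the widths `q k - r k` decrease: `β` increases while `p` decreases.
-/

theorem AffOn.apply_eq_add_slope_mul {T : ℝ → ℝ} {a b x : ℝ} (hT : AffOn T a b) (hab : a < b)
    (hx : x ∈ Set.Icc a b) : T x = T a + (T b - T a) / (b - a) * (x - a) := by
  obtain ⟨m, c, hmc⟩ := hT
  rw [hmc x hx, hmc a (Set.left_mem_Icc.2 hab.le), hmc b (Set.right_mem_Icc.2 hab.le)]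
  field_simp [sub_ne_zero.2 hab.ne']
  ring

theorem AffOn.div_slope_eq_sub_of_isFixedPt {T : ℝ → ℝ} {a b x : ℝ} (hT : AffOn T a b)
    (hab : a < b) (hTa : T a = 0) (hTb : T b ≠ 0) (hx : x ∈ Set.Icc a b) (hfix : T x = x) :
    x / (T b / (b - a)) = x - a := by
  have hline := hT.apply_eq_add_slope_mul hab hx
  rw [hTa, zero_add, sub_zero, hfix] at hline
  rw [div_eq_iff (div_ne_zero hTb (sub_ne_zero.2 hab.ne')), mul_comm, ← hline]

theorem lt_of_div_lt_div_of_lt {a b x y : ℝ} (hb : 0 < b) (hba : b < a) (hx : 0 < x)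
    (hy : 0 < y) (h : a / x < b / y) : y < x :=
  (div_lt_div_iff_of_pos_left hb hx hy).1 <|
    ((div_lt_div_iff_of_pos_right hx).2 hba).trans h

namespace SawMapSetup

variable (S : SawMapSetup) {k : ℕ}

theorem e_div_alpha (hk : 1 ≤ k) : S.e k / S.alpha k = S.e k - S.q (k + 1) := by
  have hqr := S.hqr k hk
  obtain ⟨heq, her⟩ := S.he_mem k hk
  have h := (S.haff1 k hk).div_slope_eq_sub_of_isFixedPt hqr (S.hTq (k + 1) (by omega))
    (S.hTr k ▸ (S.hp_pos k).ne') ⟨heq.le, her.le⟩ (S.he_fix k hk)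
  rwa [S.hTr k] at h

theorem p_succ_lt_e (hk : 1 ≤ k) (hks : k < S.kstar) : S.p (k + 1) < S.e k :=
  S.hp_e_small (by omega) (k + 1) (by omega) hks

theorem q_sub_r_succ_lt (hk : 1 ≤ k) : S.q (k + 1) - S.r (k + 1) < S.q k - S.r k :=
  lt_of_div_lt_div_of_lt (S.hp_pos (k + 1)) (S.hp_dec k) (sub_pos.2 (S.hrq k hk))
    (sub_pos.2 (S.hrq (k + 1) (by omega))) (S.hbeta_mono k hk)

theorem r_succ_lt (hk : 1 ≤ k) : S.r (k + 1) < S.r k :=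
  (S.hrq (k + 1) (by omega)).trans (S.hqr k hk)

end SawMapSetup

theorem technical_condition_automatic_general (S : SawMapSetup) (a m : ℝ)
    (hm1 : m < 1)
    (hline : ∀ k, S.p k = a + m * S.r k) :
    ∀ k, 1 ≤ k → k < S.kstar →
      S.T (S.r k) = S.p k ∧ S.p k < S.q k + S.e k / S.alpha k := by
  intro k hk hks
  refine ⟨S.hTr k, ?_⟩
  have hp_drop : S.p k - S.p (k + 1) < S.r k - S.r (k + 1) := by
    rw [hline k, hline (k + 1), add_sub_add_left_eq_sub, ← mul_sub]
    exact mul_lt_of_lt_one_left (sub_pos.2 (S.r_succ_lt hk)) hm1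
  rw [S.e_div_alpha hk]
  linarith [S.p_succ_lt_e hk hks, S.q_sub_r_succ_lt hk]

/-- Saw map setup (without the technical condition), assuming additionally that all local
maximum points `(r k, p k)` of the graph lie on a common straight line `p = a + m·r` of
slope `m ∈ (0, 1)`: then `q k + e k / α k > T (r k) = p k` for all `1 ≤ k < kstar`. -/
theorem technical_condition_automatic (S : SawMapSetup) (a m : ℝ)
    (hm0 : 0 < m) (hm1 : m < 1)
    (hline : ∀ k, S.p k = a + m * S.r k) :
    ∀ k, 1 ≤ k → k < S.kstar →
      S.T (S.r k) = S.p k ∧ S.p k < S.q k + S.e k / S.alpha k :=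
  technical_condition_automatic_general S a m hm1 hline
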